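/- arXiv:1001.1808 — 2 statements merged into one kernel-verified Lean document; each statement's English description precedes it below -/
import Mathlib

section
/- Fix a soft membership assignment m with 0 < α_i(m) < 1 and σ_i²(m) > 0 for i = 1,2, and fix an index n ∈ {1,…,N}. For t in a neighborhood of m_{n,1}, let m(t) denote the assignment equal to m except that its (n,1) entry is replaced by t (and its (n,2) entry by 1 − t), and let g(t) = ln G(m(t)). Then g is differentiable at t = m_{n,1}, and g′(m_{n,1}) = (1/N)[ln(σ₁²) − 2 ln(α₁) + (x_n − μ₁)²/σ₁²] − (1/N)[ln(σ₂²) − 2 ln(α₂) + (x_n − μ₂)²/σ₂²] = (2/N) ln(√(2π) α₂ f_{μ₂,σ₂}(x_n)) − (2/N) ln(√(2π) α₁ f_{μ₁,σ₁}(x_n)), where α_i, μ_i, σ_i are the parameters induced by m. -/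
open Real Finset MeasureTheory

noncomputable section

/-- Gaussian density with mean `μ` and standard deviation `σ`. -/
def gaussDen (μ σ x : ℝ) : ℝ :=
  (1 / (Real.sqrt (2 * Real.pi) * σ)) * Real.exp (-(x - μ) ^ 2 / (2 * σ ^ 2))

/-- Binary entropy-type function `H(a, b) = -a ln a - b ln b` (nats). -/
def H2 (a b : ℝ) : ℝ := -a * Real.log a - b * Real.log b

/-- A soft membership assignment: each `m n ∈ [0,1]`. -/
def isMemb {N : ℕ} (m : Fin N → ℝ) : Prop := ∀ n, 0 ≤ m n ∧ m n ≤ 1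

/-- Induced mixing weight `α` for the class with weights `w`. -/
def alph {N : ℕ} (w : Fin N → ℝ) : ℝ := (∑ n, w n) / N

/-- Induced mean `μ` for the class with weights `w`. -/
def muI {N : ℕ} (x w : Fin N → ℝ) : ℝ := (∑ n, w n * x n) / (alph w * N)

/-- Induced variance `σ²` for the class with weights `w`. -/
def sig2 {N : ℕ} (x w : Fin N → ℝ) : ℝ :=
  (∑ n, w n * (x n - muI x w) ^ 2) / (alph w * N)

/-- The objective `G(m) = exp(2 H(α₁,α₂)) (σ₁²)^{α₁} (σ₂²)^{α₂}`. -/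
def objG {N : ℕ} (x m : Fin N → ℝ) : ℝ :=
  Real.exp (2 * H2 (alph m) (alph fun n => 1 - m n)) *
    (sig2 x m) ^ (alph m) * (sig2 x fun n => 1 - m n) ^ (alph fun n => 1 - m n)

/-!
Since `ln G(m) = Σᵢ αᵢ (ln σᵢ² - 2 ln αᵢ)` over the two classes, it suffices to differentiate one
class term along one weight. Moving `w n` moves the moments `Σ w`, `Σ w x`, `Σ w x²` affinely with
slopes `1`, `x n`, `x n²`, whence `α' = 1/N` and `(σ²)' = ((x n - μ)² - σ²) / Σ w`; the class term
then has derivative `(ln σ² - 2 ln α + (x n - μ)²/σ² - 3) / N`. The second class moves in the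
opposite direction, so the constants `-3/N` cancel. The Gaussian form is the logarithm of the
density at `x n`.
-/

open Filter Function Topology

section
variable {N : ℕ} (x w : Fin N → ℝ) (n : Fin N)

def logObjGTerm : ℝ := alph w * (log (sig2 x w) - 2 * log (alph w))

lemma alph_mul_natCast : alph w * N = ∑ k, w k := by
  rcases eq_or_ne N 0 with rfl | hN
  · simp
  · exact div_mul_cancel₀ _ (Nat.cast_ne_zero.2 hN)

lemma muI_eq : muI x w = (∑ k, w k * x k) / ∑ k, w k := by
  rw [muI, alph_mul_natCast]

-- Also true when `∑ k, w k = 0`: both sides are then `0` because `a / 0 = 0`.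
lemma sig2_eq_moments : sig2 x w = (∑ k, w k * x k ^ 2) / (∑ k, w k) - muI x w ^ 2 := by
  rw [sig2, alph_mul_natCast]
  rcases eq_or_ne (∑ k, w k) 0 with hA | hA
  · simp [muI_eq, hA]
  have hexpand : ∑ k, w k * (x k - muI x w) ^ 2
      = ∑ k, w k * x k ^ 2 - 2 * muI x w * ∑ k, w k * x k + muI x w ^ 2 * ∑ k, w k := by
    simp only [Finset.mul_sum, ← Finset.sum_sub_distrib, ← Finset.sum_add_distrib]
    exact Finset.sum_congr rfl fun k _ => by ring
  rw [hexpand, muI_eq]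
  field_simp
  ring

lemma log_objG (hσ₁ : 0 < sig2 x w) (hσ₂ : 0 < sig2 x fun k => 1 - w k) :
    log (objG x w) = logObjGTerm x w + logObjGTerm x fun k => 1 - w k := by
  rw [objG, log_mul (by positivity) (by positivity), log_mul (by positivity) (by positivity),
    log_exp, log_rpow hσ₁, log_rpow hσ₂, logObjGTerm, logObjGTerm, H2]
  ring

lemma sum_update_mul (f : Fin N → ℝ) (t : ℝ) :
    ∑ k, update w n t k * f k = ∑ k, w k * f k + (t - w n) * f n := by
  rw [← Finset.sum_erase_add _ _ (mem_univ n), ← Finset.sum_erase_add _ (fun k => w k * f k)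
    (mem_univ n), update_self, Finset.sum_congr rfl fun k hk => by rw [update_of_ne (Finset.ne_of_mem_erase hk)]]
  ring

lemma hasDerivAt_sum_update_mul (f : Fin N → ℝ) (s : ℝ) :
    HasDerivAt (fun t => ∑ k, update w n t k * f k) (f n) s := by
  simp only [sum_update_mul]
  simpa using (((hasDerivAt_id s).sub_const (w n)).mul_const (f n)).const_add (∑ k, w k * f k)

lemma hasDerivAt_alph_update (s : ℝ) :
    HasDerivAt (fun t => alph (update w n t)) (1 / N) s := by
  simpa [alph] using (hasDerivAt_sum_update_mul w n (fun _ => 1) s).div_const N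

lemma hasDerivAt_sig2_update (hA : ∑ k, w k ≠ 0) :
    HasDerivAt (fun t => sig2 x (update w n t))
      (((x n - muI x w) ^ 2 - sig2 x w) / ∑ k, w k) (w n) := by
  have hA' := hasDerivAt_sum_update_mul w n (fun _ => 1) (w n)
  have hB' := hasDerivAt_sum_update_mul w n x (w n)
  have hC' := hasDerivAt_sum_update_mul w n (fun k => x k ^ 2) (w n)
  simp only [mul_one] at hA'
  have hA₀ : ∑ k, update w n (w n) k ≠ 0 := by rwa [update_eq_self]
  simp only [sig2_eq_moments, muI_eq]
  refine ((hC'.fun_div hA' hA₀).fun_sub ((hB'.fun_div hA' hA₀).fun_pow 2)).congr_deriv ?_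
  simp only [update_eq_self]
  norm_num
  field_simp
  ring

lemma sum_ne_zero_of_alph_ne_zero (hα : alph w ≠ 0) : ∑ k, w k ≠ 0 :=
  fun h => hα (by simp [alph, h])

lemma hasDerivAt_logObjGTerm_update (hα : alph w ≠ 0) (hσ : sig2 x w ≠ 0) :
    HasDerivAt (fun t => logObjGTerm x (update w n t))
      ((log (sig2 x w) - 2 * log (alph w) + (x n - muI x w) ^ 2 / sig2 x w - 3) / N) (w n) := by
  have hN : (N : ℝ) ≠ 0 := fun h => hα (by simp [alph, h])
  have hα₀ : alph (update w n (w n)) ≠ 0 := by rwa [update_eq_self]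
  have hσ₀ : sig2 x (update w n (w n)) ≠ 0 := by rwa [update_eq_self]
  have hα' := hasDerivAt_alph_update w n (w n)
  have hσ' := hasDerivAt_sig2_update x w n (sum_ne_zero_of_alph_ne_zero w hα)
  refine (hα'.fun_mul ((hσ'.log hσ₀).fun_sub ((hα'.log hα₀).const_mul 2))).congr_deriv ?_
  rw [update_eq_self, ← alph_mul_natCast]
  field_simp
  ring

lemma eventually_sig2_update_pos (hA : ∑ k, w k ≠ 0) (hσ : 0 < sig2 x w) :
    ∀ᶠ t in 𝓝 (w n), 0 < sig2 x (update w n t) := by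
  have hc := (hasDerivAt_sig2_update x w n hA).continuousAt
  simp only [ContinuousAt, update_eq_self] at hc
  exact hc.eventually (lt_mem_nhds hσ)

end

lemma log_sqrt_two_pi_mul_gaussDen {a v : ℝ} (μ y : ℝ) (ha : a ≠ 0) (hv : 0 < v) :
    log (√(2 * π) * (a * gaussDen μ √v y)) = -(log v - 2 * log a + (y - μ) ^ 2 / v) / 2 := by
  have hsqrt : 0 < √v := sqrt_pos.2 hv
  have hdensity : √(2 * π) * (a * gaussDen μ √v y) = a / √v * exp (-(y - μ) ^ 2 / (2 * v)) := by
    rw [gaussDen, sq_sqrt hv.le]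
    field_simp
  rw [hdensity, log_mul (div_ne_zero ha hsqrt.ne') (exp_ne_zero _), log_div ha hsqrt.ne', log_exp,
    log_sqrt hv.le]
  field_simp
  ring

theorem deriv_ln_objG_general
    (N : ℕ) (x : Fin N → ℝ) (m : Fin N → ℝ)
    (hα1 : 0 < alph m)
    (hα2 : 0 < alph fun n => 1 - m n)
    (hσ1 : 0 < sig2 x m) (hσ2 : 0 < sig2 x fun n => 1 - m n)
    (n : Fin N) :
    HasDerivAt (fun t : ℝ => Real.log (objG x (Function.update m n t)))
      ((1 / N) * (Real.log (sig2 x m) - 2 * Real.log (alph m)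
          + (x n - muI x m) ^ 2 / sig2 x m)
        - (1 / N) * (Real.log (sig2 x fun k => 1 - m k)
          - 2 * Real.log (alph fun k => 1 - m k)
          + (x n - muI x fun k => 1 - m k) ^ 2 / sig2 x fun k => 1 - m k))
      (m n)
    ∧
    (1 / N) * (Real.log (sig2 x m) - 2 * Real.log (alph m)
        + (x n - muI x m) ^ 2 / sig2 x m)
      - (1 / N) * (Real.log (sig2 x fun k => 1 - m k)
        - 2 * Real.log (alph fun k => 1 - m k)
        + (x n - muI x fun k => 1 - m k) ^ 2 / sig2 x fun k => 1 - m k)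
    = (2 / N) * Real.log (Real.sqrt (2 * Real.pi) * ((alph fun k => 1 - m k) *
          gaussDen (muI x fun k => 1 - m k) (Real.sqrt (sig2 x fun k => 1 - m k)) (x n)))
      - (2 / N) * Real.log (Real.sqrt (2 * Real.pi) * (alph m *
          gaussDen (muI x m) (Real.sqrt (sig2 x m)) (x n))) := by
  have hflip (t : ℝ) : (fun k => 1 - update m n t k) = update (fun k => 1 - m k) n (1 - t) :=
    funext (apply_update (fun _ y => 1 - y) m n t)
  have hd₁ := hasDerivAt_logObjGTerm_update x m n hα1.ne' hσ1.ne'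
  have hd₂ := (hasDerivAt_logObjGTerm_update x _ n hα2.ne' hσ2.ne').comp (m n)
    ((hasDerivAt_id _).const_sub 1)
  have hpos₁ := eventually_sig2_update_pos x m n (sum_ne_zero_of_alph_ne_zero m hα1.ne') hσ1
  have hpos₂ := ((continuous_sub_left 1).tendsto (m n)).eventually
    (eventually_sig2_update_pos x _ n (sum_ne_zero_of_alph_ne_zero _ hα2.ne') hσ2)
  have hlog : (fun t => log (objG x (update m n t))) =ᶠ[𝓝 (m n)]
      fun t => logObjGTerm x (update m n t) + logObjGTerm x (update (fun k => 1 - m k) n (1 - t)) := by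
    filter_upwards [hpos₁, hpos₂] with t h₁ h₂
    rw [log_objG x _ h₁ (by rwa [hflip]), hflip]
  refine ⟨((hd₁.add hd₂).congr_of_eventuallyEq hlog).congr_deriv (by ring), ?_⟩
  rw [log_sqrt_two_pi_mul_gaussDen _ _ hα1.ne' hσ1, log_sqrt_two_pi_mul_gaussDen _ _ hα2.ne' hσ2]
  ring

/-- **Derivative of `ln G` along one soft membership coordinate.**
With `m(t)` the assignment `m` whose `(n,1)` entry is replaced by `t` (and `(n,2)` entry by
`1 - t`), the function `g(t) = ln G(m(t))` is differentiable at `t = m_{n,1}` with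
derivative `(1/N)[ln σ₁² - 2 ln α₁ + (xₙ-μ₁)²/σ₁²] - (1/N)[ln σ₂² - 2 ln α₂ + (xₙ-μ₂)²/σ₂²]`,
which also equals `(2/N) ln(√(2π) α₂ f₂(xₙ)) - (2/N) ln(√(2π) α₁ f₁(xₙ))`. -/
theorem deriv_ln_objG
    (N : ℕ) (hN : 1 ≤ N) (x : Fin N → ℝ) (m : Fin N → ℝ)
    (hmemb : isMemb m)
    (hα1 : 0 < alph m) (hα1' : alph m < 1)
    (hα2 : 0 < alph fun n => 1 - m n) (hα2' : (alph fun n => 1 - m n) < 1)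
    (hσ1 : 0 < sig2 x m) (hσ2 : 0 < sig2 x fun n => 1 - m n)
    (n : Fin N) :
    HasDerivAt (fun t : ℝ => Real.log (objG x (Function.update m n t)))
      ((1 / N) * (Real.log (sig2 x m) - 2 * Real.log (alph m)
          + (x n - muI x m) ^ 2 / sig2 x m)
        - (1 / N) * (Real.log (sig2 x fun k => 1 - m k)
          - 2 * Real.log (alph fun k => 1 - m k)
          + (x n - muI x fun k => 1 - m k) ^ 2 / sig2 x fun k => 1 - m k))
      (m n)
    ∧
    (1 / N) * (Real.log (sig2 x m) - 2 * Real.log (alph m)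
        + (x n - muI x m) ^ 2 / sig2 x m)
      - (1 / N) * (Real.log (sig2 x fun k => 1 - m k)
        - 2 * Real.log (alph fun k => 1 - m k)
        + (x n - muI x fun k => 1 - m k) ^ 2 / sig2 x fun k => 1 - m k)
    = (2 / N) * Real.log (Real.sqrt (2 * Real.pi) * ((alph fun k => 1 - m k) *
          gaussDen (muI x fun k => 1 - m k) (Real.sqrt (sig2 x fun k => 1 - m k)) (x n)))
      - (2 / N) * Real.log (Real.sqrt (2 * Real.pi) * (alph m *
          gaussDen (muI x m) (Real.sqrt (sig2 x m)) (x n))) :=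
  deriv_ln_objG_general N x m hα1 hα2 hσ1 hσ2 n
end
end

section
/- (Type-class bound, Lemma 2, stated with the absolute-value cross term needed to make it precise.) Let m̂ be a soft membership assignment with induced parameters α̂_i > 0, σ̂_i² > 0 and Gaussian densities f̂_i = f_{μ̂_i, σ̂_i}, satisfying: m̂_{n,1} = 1 whenever α̂₁ f̂₁(x_n) > α̂₂ f̂₂(x_n) and m̂_{n,1} = 0 whenever α̂₁ f̂₁(x_n) < α̂₂ f̂₂(x_n). Let M > 0 with |x_n| < M for all n, let L be an odd positive integer, W = 2M/L, and for each integer k with |k| ≤ (L−1)/2 let I_k = [(k−1/2)W, (k+1/2)W) and a_k = #{n : x_n ∈ I_k}. Let p̂(x) = α̂₁ f̂₁(x) + α̂₂ f̂₂(x), let c_P = 1/∫_{−M}^{M} p̂(x) dx, and P_N(k) = c_P ∫_{I_k} p̂(x) dx. Then Σ_k (−a_k/N) ln P_N(k) ≤ (α̂₁/2) ln(2π e σ̂₁²) + (α̂₂/2) ln(2π e σ̂₂²) + H(α̂₁, α̂₂) + (α̂₁/(2σ̂₁²) + α̂₂/(2σ̂₂²)) W² + (α̂₁/σ̂₁ +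 α̂₂/σ̂₂) W − ln W − ln c_P, where H(α₁,α₂) = −α₁ ln α₁ − α₂ ln α₂. (When Σ_k P_N(k) = 1, the left-hand side equals D(a/N ‖ P_N) + H(a/N) for the empirical type a/N.) -/
/-!
Each `x_n` lies in a bin `I_k` of width `W`, on which the mixture density is at least `α̂_i f̂_i`
for both `i`. Over a distance `W` a Gaussian density drops by at most the factor
`exp (-(|x_n - μ̂_i| W + W²/2) / σ̂_i²)`, so `-ln P_N(k)` is at most
`-ln c_P - ln W - ln (α̂_i f̂_i(x_n)) + |x_n - μ̂_i| W / σ̂_i² + W² / (2σ̂_i²)` for both `i`, hence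
also for the `m̂_n`-weighted combination of the two bounds. Averaged over `n`, the induced
parameters turn the quadratic terms into `α̂_i / 2`, completing `-ln f̂_i` to the Gaussian entropy
`½ ln (2πe σ̂_i²)`, and Cauchy–Schwarz bounds the weighted mean of `|x_n - μ̂_i|` by `α̂_i σ̂_i`.
-/

open Real Finset MeasureTheory intervalIntegral

noncomputable section

@[fun_prop]
lemma continuous_gaussDen (μ σ : ℝ) : Continuous (gaussDen μ σ) := by
  unfold gaussDen
  fun_prop

lemma gaussDen_pos (μ : ℝ) {σ : ℝ} (hσ : 0 < σ) (t : ℝ) : 0 < gaussDen μ σ t := by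
  unfold gaussDen
  positivity

lemma log_gaussDen (μ : ℝ) {v : ℝ} (hv : 0 < v) (t : ℝ) :
    Real.log (gaussDen μ (Real.sqrt v) t) = -Real.log (2 * π * v) / 2 - (t - μ) ^ 2 / (2 * v) := by
  rw [gaussDen, Real.log_mul (by positivity) (Real.exp_ne_zero _), Real.log_exp, one_div,
    Real.log_inv, ← Real.sqrt_mul (by positivity), Real.log_sqrt (by positivity),
    Real.sq_sqrt hv.le]
  ring

lemma gaussDen_mul_exp_le (μ : ℝ) {v : ℝ} (hv : 0 < v) {t y W : ℝ} (h : |y - t| ≤ W) :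
    gaussDen μ (Real.sqrt v) t * Real.exp (-(|t - μ| * W / v + W ^ 2 / (2 * v))) ≤
      gaussDen μ (Real.sqrt v) y := by
  have hdist : (y - μ) ^ 2 ≤ (|t - μ| + W) ^ 2 := by
    rw [← sq_abs (y - μ)]
    exact pow_le_pow_left₀ (abs_nonneg _) ((abs_sub_le y t μ).trans (by linarith)) 2
  have hexp : -(t - μ) ^ 2 / (2 * v) + -(|t - μ| * W / v + W ^ 2 / (2 * v)) =
      -(|t - μ| + W) ^ 2 / (2 * v) := by
    rw [← sq_abs (t - μ)]
    field_simp
    ring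
  rw [gaussDen, gaussDen, mul_assoc, ← Real.exp_add, Real.sq_sqrt hv.le, hexp]
  gcongr

/-- Bounds `-ln` of the mass that any density `p ≥ α f_{μ,√v}` gives to an interval of length
`W` containing `t`. -/
def classCost (α μ v W t : ℝ) : ℝ :=
  -Real.log (α * gaussDen μ (Real.sqrt v) t) + |t - μ| * W / v + W ^ 2 / (2 * v)

lemma neg_log_mul_integral_le {p : ℝ → ℝ} (hp : Continuous p) {α c μ v : ℝ} (hα : 0 < α)
    (hc : 0 < c) (hv : 0 < v) (hpα : ∀ y, α * gaussDen μ (Real.sqrt v) y ≤ p y)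
    {lo hi t : ℝ} (hlo : lo ≤ t) (hhi : t < hi) :
    -Real.log (c * ∫ y in lo..hi, p y) ≤
      -Real.log c - Real.log (hi - lo) + classCost α μ v (hi - lo) t := by
  set W := hi - lo
  have hW : 0 < W := by simp only [W]; linarith
  set E := |t - μ| * W / v + W ^ 2 / (2 * v)
  have hft := gaussDen_pos μ (Real.sqrt_pos.2 hv) t
  have hmass : W * (α * (gaussDen μ (Real.sqrt v) t * Real.exp (-E))) ≤ ∫ y in lo..hi, p y := by
    have hmono := integral_mono_on (hlo.trans hhi.le) (intervalIntegrable_const (μ := volume))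
      (hp.intervalIntegrable lo hi)
      (fun y (hy : y ∈ Set.Icc lo hi) =>
        (mul_le_mul_of_nonneg_left (gaussDen_mul_exp_le μ hv (t := t) (W := W) (abs_le.2
          ⟨by linarith [hy.1], by linarith [hy.2]⟩)) hα.le).trans (hpα y))
    simpa only [intervalIntegral.integral_const, smul_eq_mul] using hmono
  calc -Real.log (c * ∫ y in lo..hi, p y)
      ≤ -Real.log (c * (W * (α * (gaussDen μ (Real.sqrt v) t * Real.exp (-E))))) :=
        neg_le_neg (Real.log_le_log (by positivity) (by gcongr))
    _ = -Real.log c - Real.log W + classCost α μ v W t := by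
        rw [classCost, Real.log_mul hc.ne' (by positivity), Real.log_mul hW.ne' (by positivity),
          ← mul_assoc, Real.log_mul (by positivity) (Real.exp_ne_zero _), Real.log_exp]
        ring

def binIndex (W t : ℝ) : ℤ := ⌊t / W + 1 / 2⌋

lemma mem_bin_iff {W : ℝ} (hW : 0 < W) (t : ℝ) (k : ℤ) :
    (((k : ℝ) - 1 / 2) * W ≤ t ∧ t < ((k : ℝ) + 1 / 2) * W) ↔ k = binIndex W t := by
  rw [binIndex, ← le_div_iff₀ hW, ← div_lt_iff₀ hW, eq_comm, Int.floor_eq_iff]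
  constructor <;> rintro ⟨h₁, h₂⟩ <;> constructor <;> linarith

lemma binIndex_mem_Icc {W : ℝ} (hW : 0 < W) (j : ℕ) {t : ℝ}
    (ht : |t| < (2 * j + 1) * W / 2) : binIndex W t ∈ Finset.Icc (-(j : ℤ)) j := by
  have hlt : t / W < j + 1 / 2 := by rw [div_lt_iff₀ hW]; linarith [(abs_lt.1 ht).2]
  have hgt : -(j : ℝ) - 1 / 2 < t / W := by rw [lt_div_iff₀ hW]; linarith [(abs_lt.1 ht).1]
  rw [binIndex, Finset.mem_Icc, Int.le_floor, ← Int.lt_add_one_iff, Int.floor_lt]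
  push_cast
  constructor <;> linarith

lemma sum_mul_eq_sum_comp {ι κ R : Type*} [Fintype ι] [NonAssocSemiring R] (S : Finset κ)
    (P : κ → ι → Prop) [∀ k i, Decidable (P k i)] (a g : κ → R) (b : ι → κ)
    (ha : ∀ k, a k = ∑ i, if P k i then 1 else 0) (hb : ∀ k i, P k i ↔ k = b i)
    (hS : ∀ i, b i ∈ S) : ∑ k ∈ S, a k * g k = ∑ i, g (b i) := by
  simp_rw [ha, Finset.sum_mul]
  rw [Finset.sum_comm]
  refine Finset.sum_congr rfl fun i _ => ?_
  rw [Finset.sum_eq_single_of_mem (b i) (hS i) fun k _ hk => by simp [(hb k i).not.2 hk]]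
  simp [(hb _ _).2 rfl]

lemma sum_binCount_mul_eq {N : ℕ} {W : ℝ} (hW : 0 < W) (j : ℕ) (x : Fin N → ℝ)
    (hx : ∀ n, |x n| < (2 * j + 1) * W / 2) (a G : ℤ → ℝ)
    (ha : ∀ k : ℤ, a k = ∑ n : Fin N,
      if ((k : ℝ) - 1 / 2) * W ≤ x n ∧ x n < ((k : ℝ) + 1 / 2) * W then (1 : ℝ) else 0) :
    ∑ k ∈ Finset.Icc (-(j : ℤ)) j, a k * G k = ∑ n, G (binIndex W (x n)) :=
  sum_mul_eq_sum_comp _ _ a G _ ha (fun k n => mem_bin_iff hW (x n) k)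
    (fun n => binIndex_mem_Icc hW j (hx n))

lemma neg_log_mul_integral_bin_le {p : ℝ → ℝ} (hp : Continuous p) {α c μ v W : ℝ} (hα : 0 < α)
    (hc : 0 < c) (hv : 0 < v) (hW : 0 < W) (hpα : ∀ y, α * gaussDen μ (Real.sqrt v) y ≤ p y)
    (t : ℝ) :
    -Real.log (c * ∫ y in ((binIndex W t : ℝ) - 1 / 2) * W..((binIndex W t : ℝ) + 1 / 2) * W,
      p y) ≤ -Real.log c - Real.log W + classCost α μ v W t := by
  have hbin := (mem_bin_iff hW t (binIndex W t)).2 rfl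
  have h := neg_log_mul_integral_le hp hα hc hv hpα hbin.1 hbin.2
  rwa [show ((binIndex W t : ℝ) + 1 / 2) * W - ((binIndex W t : ℝ) - 1 / 2) * W = W by
    ring] at h

lemma integral_gaussMixture_pos {α₁ α₂ μ₁ μ₂ v₁ v₂ : ℝ} (hα₁ : 0 < α₁) (hα₂ : 0 < α₂)
    (hv₁ : 0 < v₁) (hv₂ : 0 < v₂) {lo hi : ℝ} (h : lo < hi) :
    0 < ∫ y in lo..hi, α₁ * gaussDen μ₁ (Real.sqrt v₁) y + α₂ * gaussDen μ₂ (Real.sqrt v₂) y :=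
  intervalIntegral_pos_of_pos_on (Continuous.intervalIntegrable (by fun_prop) lo hi)
    (fun y _ => add_pos (mul_pos hα₁ (gaussDen_pos μ₁ (Real.sqrt_pos.2 hv₁) y))
      (mul_pos hα₂ (gaussDen_pos μ₂ (Real.sqrt_pos.2 hv₂) y))) h

lemma neg_log_mul_integral_gaussMixture_le {α₁ α₂ μ₁ μ₂ v₁ v₂ c W : ℝ} (hα₁ : 0 < α₁)
    (hα₂ : 0 < α₂) (hv₁ : 0 < v₁) (hv₂ : 0 < v₂) (hc : 0 < c) (hW : 0 < W) (t : ℝ) :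
    -Real.log (c * ∫ y in ((binIndex W t : ℝ) - 1 / 2) * W..((binIndex W t : ℝ) + 1 / 2) * W,
        α₁ * gaussDen μ₁ (Real.sqrt v₁) y + α₂ * gaussDen μ₂ (Real.sqrt v₂) y) ≤
      -Real.log c - Real.log W + classCost α₁ μ₁ v₁ W t ∧
    -Real.log (c * ∫ y in ((binIndex W t : ℝ) - 1 / 2) * W..((binIndex W t : ℝ) + 1 / 2) * W,
        α₁ * gaussDen μ₁ (Real.sqrt v₁) y + α₂ * gaussDen μ₂ (Real.sqrt v₂) y) ≤
      -Real.log c - Real.log W + classCost α₂ μ₂ v₂ W t := by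
  have hf₁ := gaussDen_pos μ₁ (Real.sqrt_pos.2 hv₁)
  have hf₂ := gaussDen_pos μ₂ (Real.sqrt_pos.2 hv₂)
  have hp : Continuous fun y =>
      α₁ * gaussDen μ₁ (Real.sqrt v₁) y + α₂ * gaussDen μ₂ (Real.sqrt v₂) y := by
    fun_prop
  exact ⟨neg_log_mul_integral_bin_le hp hα₁ hc hv₁ hW
      (fun y => le_add_of_nonneg_right (mul_pos hα₂ (hf₂ y)).le) t,
    neg_log_mul_integral_bin_le hp hα₂ hc hv₂ hW
      (fun y => le_add_of_nonneg_left (mul_pos hα₁ (hf₁ y)).le) t⟩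

def classCostBound (α v W : ℝ) : ℝ :=
  α / 2 * Real.log (2 * π * Real.exp 1 * v) - α * Real.log α + α / (2 * v) * W ^ 2
    + α / Real.sqrt v * W

lemma sum_mul_abs_sub_le {ι : Type*} (s : Finset ι) {w x : ι → ℝ} (hw : ∀ i ∈ s, 0 ≤ w i)
    (μ : ℝ) : (∑ i ∈ s, w i * |x i - μ|) ^ 2 ≤ (∑ i ∈ s, w i) * ∑ i ∈ s, w i * (x i - μ) ^ 2 :=
  sum_sq_le_sum_mul_sum_of_sq_le_mul s hw (fun i hi => mul_nonneg (hw i hi) (sq_nonneg _))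
    (fun i _ => le_of_eq (by rw [mul_pow, sq_abs]; ring))

lemma sum_mul_classCost_le {ι : Type*} (s : Finset ι) {w x : ι → ℝ} (hw : ∀ i ∈ s, 0 ≤ w i)
    {α μ v W A : ℝ} (hα : 0 < α) (hv : 0 < v) (hW : 0 ≤ W) (hA : 0 ≤ A)
    (hsum : ∑ i ∈ s, w i = α * A) (hvar : ∑ i ∈ s, w i * (x i - μ) ^ 2 = v * (α * A)) :
    ∑ i ∈ s, w i * classCost α μ v W (x i) ≤ classCostBound α v W * A := by
  have hs : 0 < Real.sqrt v := Real.sqrt_pos.2 hv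
  have habs : ∑ i ∈ s, w i * |x i - μ| ≤ α * A * Real.sqrt v := by
    refine le_of_pow_le_pow_left₀ two_ne_zero (by positivity) ?_
    calc (∑ i ∈ s, w i * |x i - μ|) ^ 2 ≤ (α * A) * (v * (α * A)) := by
          rw [← hvar, ← hsum]; exact sum_mul_abs_sub_le s hw μ
      _ = (α * A * Real.sqrt v) ^ 2 := by rw [mul_pow, Real.sq_sqrt hv.le]; ring
  have hexpand : ∑ i ∈ s, w i * classCost α μ v W (x i) =
      (Real.log (2 * π * v) / 2 - Real.log α + W ^ 2 / (2 * v)) * ∑ i ∈ s, w i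
        + (∑ i ∈ s, w i * (x i - μ) ^ 2) / (2 * v) + W / v * ∑ i ∈ s, w i * |x i - μ| := by
    rw [Finset.mul_sum, Finset.sum_div, Finset.mul_sum, ← Finset.sum_add_distrib,
      ← Finset.sum_add_distrib]
    refine Finset.sum_congr rfl fun i _ => ?_
    rw [classCost, Real.log_mul hα.ne' (gaussDen_pos μ hs _).ne', log_gaussDen μ hv]
    ring
  have hlog : Real.log (2 * π * Real.exp 1 * v) = Real.log (2 * π * v) + 1 := by
    rw [mul_right_comm, Real.log_mul (by positivity) (Real.exp_ne_zero 1), Real.log_exp]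
  calc ∑ i ∈ s, w i * classCost α μ v W (x i)
      ≤ (Real.log (2 * π * v) / 2 - Real.log α + W ^ 2 / (2 * v)) * (α * A)
        + v * (α * A) / (2 * v) + W / v * (α * A * Real.sqrt v) := by
        rw [hexpand, hsum, hvar]; gcongr
    _ = classCostBound α v W * A := by
        rw [classCostBound, hlog]
        field_simp
        linear_combination 2 * A * W * Real.mul_self_sqrt hv.le

lemma sum_eq_alph_mul {N : ℕ} (hN : N ≠ 0) (w : Fin N → ℝ) : ∑ n, w n = alph w * N := by
  rw [alph, div_mul_cancel₀ _ (Nat.cast_ne_zero.2 hN)]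

lemma sum_mul_sq_sub_muI_eq {N : ℕ} (x w : Fin N → ℝ) (h : alph w * N ≠ 0) :
    ∑ n, w n * (x n - muI x w) ^ 2 = sig2 x w * (alph w * N) :=
  (div_mul_cancel₀ _ h).symm

lemma sum_mul_classCost_induced_le {N : ℕ} (hN : N ≠ 0) (x w : Fin N → ℝ)
    (hw : ∀ n, 0 ≤ w n) (hα : 0 < alph w) (hv : 0 < sig2 x w) {W : ℝ} (hW : 0 ≤ W) :
    ∑ n, w n * classCost (alph w) (muI x w) (sig2 x w) W (x n) ≤
      classCostBound (alph w) (sig2 x w) W * N :=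
  sum_mul_classCost_le _ (fun n _ => hw n) hα hv hW (Nat.cast_nonneg N) (sum_eq_alph_mul hN w)
    (sum_mul_sq_sub_muI_eq x w (by positivity))

lemma sum_div_le_add_classCostBound {N : ℕ} (hN : N ≠ 0) (x w₁ w₂ : Fin N → ℝ)
    (hw₁ : ∀ n, 0 ≤ w₁ n) (hw₂ : ∀ n, 0 ≤ w₂ n) (hw : ∀ n, w₁ n + w₂ n = 1)
    (hα₁ : 0 < alph w₁) (hα₂ : 0 < alph w₂) (hv₁ : 0 < sig2 x w₁) (hv₂ : 0 < sig2 x w₂)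
    {W : ℝ} (hW : 0 ≤ W) (g : Fin N → ℝ) (B : ℝ)
    (hg₁ : ∀ n, g n ≤ B + classCost (alph w₁) (muI x w₁) (sig2 x w₁) W (x n))
    (hg₂ : ∀ n, g n ≤ B + classCost (alph w₂) (muI x w₂) (sig2 x w₂) W (x n)) :
    ∑ n, g n / N ≤
      B + classCostBound (alph w₁) (sig2 x w₁) W + classCostBound (alph w₂) (sig2 x w₂) W := by
  have hN' : (0 : ℝ) < N := by positivity
  rw [← Finset.sum_div, div_le_iff₀ hN']
  calc ∑ n, g n
      ≤ ∑ n, (B + (w₁ n * classCost (alph w₁) (muI x w₁) (sig2 x w₁) W (x n)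
          + w₂ n * classCost (alph w₂) (muI x w₂) (sig2 x w₂) W (x n))) := by
        refine Finset.sum_le_sum fun n _ => ?_
        calc g n = w₁ n * (g n - B) + w₂ n * (g n - B) + B := by
              rw [← add_mul, hw n, one_mul, sub_add_cancel]
          _ ≤ _ := by
              rw [add_comm _ B]
              gcongr <;> [exact hw₁ n; linarith [hg₁ n]; exact hw₂ n; linarith [hg₂ n]]
    _ ≤ B * N + (classCostBound (alph w₁) (sig2 x w₁) W * N
          + classCostBound (alph w₂) (sig2 x w₂) W * N) := by
        rw [Finset.sum_add_distrib, Finset.sum_add_distrib, Finset.sum_const, Finset.card_univ,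
          Fintype.card_fin, nsmul_eq_mul, mul_comm]
        exact add_le_add le_rfl (add_le_add (sum_mul_classCost_induced_le hN x w₁ hw₁ hα₁ hv₁ hW)
          (sum_mul_classCost_induced_le hN x w₂ hw₂ hα₂ hv₂ hW))
    _ = _ := by ring

theorem type_class_bound_general
    (N : ℕ) (hN : 1 ≤ N) (x : Fin N → ℝ) (mhat : Fin N → ℝ)
    (hmemb : isMemb mhat)
    (hα1 : 0 < alph mhat) (hα2 : 0 < alph fun n => 1 - mhat n)
    (hσ1 : 0 < sig2 x mhat) (hσ2 : 0 < sig2 x fun n => 1 - mhat n)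
    -- abbreviations for the induced parameters and densities
    (α₁ α₂ μ₁ μ₂ v₁ v₂ : ℝ) (f₁ f₂ : ℝ → ℝ)
    (hα₁ : α₁ = alph mhat) (hα₂ : α₂ = alph fun n => 1 - mhat n)
    (hμ₁ : μ₁ = muI x mhat) (hμ₂ : μ₂ = muI x fun n => 1 - mhat n)
    (hv₁ : v₁ = sig2 x mhat) (hv₂ : v₂ = sig2 x fun n => 1 - mhat n)
    (hf₁ : f₁ = gaussDen μ₁ (Real.sqrt v₁)) (hf₂ : f₂ = gaussDen μ₂ (Real.sqrt v₂))
    -- binning setup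
    (M : ℝ) (hM : 0 < M) (hbound : ∀ n, |x n| < M)
    (L : ℕ) (hLodd : Odd L)
    (W : ℝ) (hW : W = 2 * M / L)
    -- empirical bin counts
    (a : ℤ → ℝ)
    (ha : ∀ k : ℤ, a k =
      ∑ n : Fin N, if ((k : ℝ) - 1 / 2) * W ≤ x n ∧ x n < ((k : ℝ) + 1 / 2) * W
        then (1 : ℝ) else 0)
    -- normalization constant and binned model probabilities
    (cP : ℝ) (hcP : cP = 1 / ∫ y in (-M)..M, (α₁ * f₁ y + α₂ * f₂ y))
    (PN : ℤ → ℝ)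
    (hPN : ∀ k : ℤ, PN k =
      cP * ∫ y in (((k : ℝ) - 1 / 2) * W)..(((k : ℝ) + 1 / 2) * W), (α₁ * f₁ y + α₂ * f₂ y)) :
    ∑ k ∈ Finset.Icc (-(((L : ℤ) - 1) / 2)) (((L : ℤ) - 1) / 2),
        (-(a k) / N) * Real.log (PN k) ≤
      α₁ / 2 * Real.log (2 * Real.pi * Real.exp 1 * v₁)
        + α₂ / 2 * Real.log (2 * Real.pi * Real.exp 1 * v₂)
        + H2 α₁ α₂
        + (α₁ / (2 * v₁) + α₂ / (2 * v₂)) * W ^ 2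
        + (α₁ / Real.sqrt v₁ + α₂ / Real.sqrt v₂) * W
        - Real.log W - Real.log cP := by
  obtain ⟨j, rfl⟩ := hLodd
  subst hα₁ hα₂ hμ₁ hμ₂ hv₁ hv₂ hf₁ hf₂
  have hWpos : 0 < W := by rw [hW]; positivity
  have hcPpos : 0 < cP := by
    rw [hcP]
    exact one_div_pos.2 (integral_gaussMixture_pos hα1 hα2 hσ1 hσ2 (by linarith))
  have key := sum_div_le_add_classCostBound (Nat.one_le_iff_ne_zero.1 hN) x mhat
    (fun n => 1 - mhat n) (fun n => (hmemb n).1) (fun n => sub_nonneg.2 (hmemb n).2)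
    (fun n => add_sub_cancel _ _) hα1 hα2 hσ1 hσ2 hWpos.le
    (fun n => -Real.log (PN (binIndex W (x n)))) (-Real.log cP - Real.log W)
    (fun n => by
      rw [hPN]; exact (neg_log_mul_integral_gaussMixture_le hα1 hα2 hσ1 hσ2 hcPpos hWpos _).1)
    (fun n => by
      rw [hPN]; exact (neg_log_mul_integral_gaussMixture_le hα1 hα2 hσ1 hσ2 hcPpos hWpos _).2)
  have hx : ∀ n, |x n| < (2 * j + 1) * W / 2 := fun n => by
    convert hbound n using 1; rw [hW]; push_cast; field_simp
  simp_rw [show (((2 * j + 1 : ℕ) : ℤ) - 1) / 2 = j by omega,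
    show ∀ k, -(a k) / N * Real.log (PN k) = a k * (-Real.log (PN k) / N) by intro k; ring,
    sum_binCount_mul_eq hWpos j x hx a _ ha]
  unfold classCostBound at key
  unfold H2
  linarith

/-- **Lemma 2 (type-class bound).** For a MAP-consistent soft assignment `m̂`, binning the
data into `L` bins of width `W = 2M/L` with empirical counts `a_k` and binned model
probabilities `P_N(k) = c_P ∫_{I_k} p̂`, one has
`∑_k (-a_k/N) ln P_N(k) ≤ (α̂₁/2) ln(2πe σ̂₁²) + (α̂₂/2) ln(2πe σ̂₂²) + H(α̂₁,α̂₂)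
  + (α̂₁/(2σ̂₁²) + α̂₂/(2σ̂₂²)) W² + (α̂₁/σ̂₁ + α̂₂/σ̂₂) W - ln W - ln c_P`. -/
theorem type_class_bound
    (N : ℕ) (hN : 1 ≤ N) (x : Fin N → ℝ) (mhat : Fin N → ℝ)
    (hmemb : isMemb mhat)
    (hα1 : 0 < alph mhat) (hα2 : 0 < alph fun n => 1 - mhat n)
    (hσ1 : 0 < sig2 x mhat) (hσ2 : 0 < sig2 x fun n => 1 - mhat n)
    -- abbreviations for the induced parameters and densities
    (α₁ α₂ μ₁ μ₂ v₁ v₂ : ℝ) (f₁ f₂ : ℝ → ℝ)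
    (hα₁ : α₁ = alph mhat) (hα₂ : α₂ = alph fun n => 1 - mhat n)
    (hμ₁ : μ₁ = muI x mhat) (hμ₂ : μ₂ = muI x fun n => 1 - mhat n)
    (hv₁ : v₁ = sig2 x mhat) (hv₂ : v₂ = sig2 x fun n => 1 - mhat n)
    (hf₁ : f₁ = gaussDen μ₁ (Real.sqrt v₁)) (hf₂ : f₂ = gaussDen μ₂ (Real.sqrt v₂))
    -- the MAP condition from Theorem 1
    (hMAP1 : ∀ n, α₂ * f₂ (x n) < α₁ * f₁ (x n) → mhat n = 1)
    (hMAP0 : ∀ n, α₁ * f₁ (x n) < α₂ * f₂ (x n) → mhat n = 0)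
    -- binning setup
    (M : ℝ) (hM : 0 < M) (hbound : ∀ n, |x n| < M)
    (L : ℕ) (hL : 0 < L) (hLodd : Odd L)
    (W : ℝ) (hW : W = 2 * M / L)
    -- empirical bin counts
    (a : ℤ → ℝ)
    (ha : ∀ k : ℤ, a k =
      ∑ n : Fin N, if ((k : ℝ) - 1 / 2) * W ≤ x n ∧ x n < ((k : ℝ) + 1 / 2) * W
        then (1 : ℝ) else 0)
    -- normalization constant and binned model probabilities
    (cP : ℝ) (hcP : cP = 1 / ∫ y in (-M)..M, (α₁ * f₁ y + α₂ * f₂ y))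
    (PN : ℤ → ℝ)
    (hPN : ∀ k : ℤ, PN k =
      cP * ∫ y in (((k : ℝ) - 1 / 2) * W)..(((k : ℝ) + 1 / 2) * W), (α₁ * f₁ y + α₂ * f₂ y)) :
    ∑ k ∈ Finset.Icc (-(((L : ℤ) - 1) / 2)) (((L : ℤ) - 1) / 2),
        (-(a k) / N) * Real.log (PN k) ≤
      α₁ / 2 * Real.log (2 * Real.pi * Real.exp 1 * v₁)
        + α₂ / 2 * Real.log (2 * Real.pi * Real.exp 1 * v₂)
        + H2 α₁ α₂
        + (α₁ / (2 * v₁) + α₂ / (2 * v₂)) * W ^ 2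
        + (α₁ / Real.sqrt v₁ + α₂ / Real.sqrt v₂) * W
        - Real.log W - Real.log cP :=
  type_class_bound_general N hN x mhat hmemb hα1 hα2 hσ1 hσ2 α₁ α₂ μ₁ μ₂ v₁ v₂ f₁ f₂ hα₁ hα₂ hμ₁ hμ₂
    hv₁ hv₂ hf₁ hf₂ M hM hbound L hLodd W hW a ha cP hcP PN hPN

end
end
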